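/- arXiv:1804.10873 — 16 statements merged into one kernel-verified Lean document; each statement's English description precedes it below -/
import Mathlib

section
/- Let A and B be complete atomic Boolean algebras and f : A → B a homomorphism of complete Boolean algebras (a Boolean algebra homomorphism preserving arbitrary suprema and infima). If b is an atom of B, then f♭(b) := ⨅{a ∈ A | b ≤ f(a)} is an atom of A. -/
/-- If `f : A → B` is a homomorphism of complete Boolean algebras between
complete atomic Boolean algebras and `b` is an atom of `B`, then
`f♭(b) = ⨅ {a | b ≤ f a}` is an atom of `A`. -/
theorem stmt_0 {A B : Type*} [CompleteAtomicBooleanAlgebra A] [CompleteAtomicBooleanAlgebra B]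
    (f : A → B)
    (hbot : f ⊥ = ⊥) (htop : f ⊤ = ⊤)
    (hsup : ∀ x y : A, f (x ⊔ y) = f x ⊔ f y)
    (hinf : ∀ x y : A, f (x ⊓ y) = f x ⊓ f y)
    (hcompl : ∀ x : A, f xᶜ = (f x)ᶜ)
    (hsSup : ∀ X : Set A, f (sSup X) = sSup (f '' X))
    (hsInf : ∀ X : Set A, f (sInf X) = sInf (f '' X))
    (b : B) (hb : IsAtom b) :
    IsAtom (sInf {a : A | b ≤ f a}) := by
  set S : Set A := {a : A | b ≤ f a} with hS
  set c : A := sInf S with hc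
  -- b ≤ f c
  have hbfc : b ≤ f c := by
    rw [hc, hsInf]
    exact le_sInf (by rintro y ⟨a, ha, rfl⟩; exact ha)
  -- c ≠ ⊥
  have hcne : c ≠ ⊥ := by
    intro h
    rw [h, hbot] at hbfc
    exact hb.1 (le_bot_iff.mp hbfc)
  -- atom splits over sup
  have hsplit : ∀ u v : B, b ≤ u ⊔ v → b ≤ u ∨ b ≤ v := by
    intro u v huv
    by_contra h
    push_neg at h
    obtain ⟨h1, h2⟩ := h
    have e1 : b ⊓ u = ⊥ := by
      rcases (hb.le_iff.mp inf_le_left) with h | h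
      · exact h
      · exact absurd (h ▸ inf_le_right) h1
    have e2 : b ⊓ v = ⊥ := by
      rcases (hb.le_iff.mp inf_le_left) with h | h
      · exact h
      · exact absurd (h ▸ inf_le_right) h2
    have : b = ⊥ := by
      have := inf_eq_left.mpr huv
      rw [inf_sup_left, e1, e2, sup_idem] at this
      exact this.symm
    exact hb.1 this
  constructor
  · exact fun h => hcne (le_bot_iff.mp h.le)
  · intro x hx
    by_contra hxne
    have hxle : x ≤ c := hx.le
    have hdecomp : c = x ⊔ (c ⊓ xᶜ) := by
      rw [sup_inf_left, sup_compl_eq_top, inf_top_eq, sup_eq_right.mpr hxle]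
    have : b ≤ f x ⊔ f (c ⊓ xᶜ) := by
      rw [← hsup]; rw [hdecomp] at hbfc; exact hbfc
    rcases hsplit _ _ this with h | h
    · -- x ∈ S, so c ≤ x, contradicting x < c
      exact absurd (sInf_le (show x ∈ S from h)) (not_le_of_gt hx)
    · -- c ⊓ xᶜ ∈ S, so c ≤ c ⊓ xᶜ ≤ xᶜ
      have hcx : c ≤ xᶜ := le_trans (sInf_le (show c ⊓ xᶜ ∈ S from h)) inf_le_right
      have : x ≤ ⊥ := by
        calc x = x ⊓ c := (inf_eq_left.mpr hxle).symm
        _ ≤ x ⊓ xᶜ := inf_le_inf_left x hcx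
        _ = ⊥ := inf_compl_eq_bot
      exact hxne (le_bot_iff.mp this)
end

section
/- There exist multi-relational Kripke frames M₁ = (W₁,S₁) and M₂ = (W₂,S₂), with S₁ and S₂ singleton sets of relations, and a homomorphism f of multi-relational Kripke frames from M₁ to M₂ which is NOT a homomorphism of neighborhood frames from U(M₁) to U(M₂), where U(M) denotes the neighborhood frame (W, 𝒩_M) with 𝒩_M(x) = {R[x] | R ∈ S} and R[x] = {y ∈ W | x R y}. (For instance W₁ = {0}, W₂ = {0,1}, with the single relation {(0,0)} on each, and f(0) = 0.) -/
/-- A homomorphism of multi-relational Kripke frames. -/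
def MultiHom {W₁ W₂ : Type*} (S₁ : Set (W₁ → W₁ → Prop)) (S₂ : Set (W₂ → W₂ → Prop))
    (f : W₁ → W₂) : Prop :=
  (∀ x : W₁, ∀ R₂ ∈ S₂, ∃ R₁ ∈ S₁, ∀ y : W₁, R₁ x y → R₂ (f x) (f y)) ∧
  (∀ x : W₁, ∀ R₁ ∈ S₁, ∃ R₂ ∈ S₂, ∀ u : W₂, R₂ (f x) u → ∃ y : W₁, R₁ x y ∧ f y = u)

/-- A homomorphism of neighborhood frames. -/
def NbhdHom {C₁ C₂ : Type*} (𝒩₁ : C₁ → Set (Set C₁)) (𝒩₂ : C₂ → Set (Set C₂))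
    (f : C₁ → C₂) : Prop :=
  ∀ (c : C₁) (X : Set C₂), f ⁻¹' X ∈ 𝒩₁ c ↔ X ∈ 𝒩₂ (f c)

/-- The "underlying" neighborhood frame of a multi-relational Kripke frame:
`𝒩_M(x) = {R[x] | R ∈ S}`. -/
def UM {W : Type*} (S : Set (W → W → Prop)) : W → Set (Set W) :=
  fun x => {Y | ∃ R ∈ S, Y = {y | R x y}}

/-- there are multi-relational Kripke frames with singleton sets of relations
and a homomorphism between them which is not a homomorphism of the underlying
neighborhood frames. -/
theorem stmt_3 : ∃ (W₁ W₂ : Type) (_ : Nonempty W₁) (_ : Nonempty W₂)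
    (R₁ : W₁ → W₁ → Prop) (R₂ : W₂ → W₂ → Prop) (f : W₁ → W₂),
    MultiHom {R₁} {R₂} f ∧ ¬ NbhdHom (UM {R₁}) (UM {R₂}) f := by
  refine ⟨Unit, Bool, ⟨()⟩, ⟨false⟩, fun _ _ => True, fun _ c => c = false,
    fun _ => false, ⟨?_, ?_⟩, ?_⟩
  · intro x R₂ hR₂
    refine ⟨fun _ _ => True, rfl, fun y _ => ?_⟩
    simp only [Set.mem_singleton_iff] at hR₂
    subst hR₂; rfl
  · intro x R₁ hR₁
    refine ⟨fun _ c => c = false, rfl, fun u hu => ⟨(), ?_, hu.symm⟩⟩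
    simp only [Set.mem_singleton_iff] at hR₁
    subst hR₁; trivial
  · intro h
    have := (h () Set.univ).mp (by
      refine ⟨fun _ _ => True, rfl, ?_⟩
      ext y; simp)
    obtain ⟨R, hR, hEq⟩ := this
    simp only [Set.mem_singleton_iff] at hR
    subst hR
    have : (true : Bool) ∈ {y : Bool | y = false} := hEq ▸ Set.mem_univ true
    simp at this
end

section
/- Let κ be a cardinal and let M₁ = (W₁,S₁) and M₂ = (W₂,S₂) be κ-downward directed multi-relational Kripke frames. A map f : W₁ → W₂ is a homomorphism of multi-relational Kripke frames from M₁ to M₂ if and only if f is a homomorphism of neighborhood frames from N(M₁) to N(M₂). -/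
universe u

/-- `S` is κ-downward directed: every subfamily of size `< κ` has a lower bound in `S`. -/
def DownDirected {W : Type u} (S : Set (W → W → Prop)) (κ : Cardinal.{u}) : Prop :=
  ∀ S' ⊆ S, Cardinal.mk ↥S' < κ → ∃ R ∈ S, ∀ x y : W, R x y → ∀ Q ∈ S', Q x y

/-- The neighborhood frame `N(M)` of a multi-relational Kripke frame `M = (W,S)`:
`𝒩_M(x) = {Y | R[x] ⊆ Y for some R ∈ S}`. -/
def NM {W : Type*} (S : Set (W → W → Prop)) : W → Set (Set W) :=
  fun x => {Y | ∃ R ∈ S, {y | R x y} ⊆ Y}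

/-- for κ-downward directed multi-relational Kripke frames `M₁`, `M₂`,
a map `f` is a homomorphism of multi-relational Kripke frames `M₁ → M₂` iff it is a
homomorphism of neighborhood frames `N(M₁) → N(M₂)`. -/
theorem stmt_5 {W₁ W₂ : Type u} [Nonempty W₁] [Nonempty W₂] (κ : Cardinal.{u})
    (S₁ : Set (W₁ → W₁ → Prop)) (S₂ : Set (W₂ → W₂ → Prop))
    (hS₁ : S₁.Nonempty) (hS₂ : S₂.Nonempty)
    (hdd₁ : DownDirected S₁ κ) (hdd₂ : DownDirected S₂ κ)
    (f : W₁ → W₂) :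
    MultiHom S₁ S₂ f ↔ NbhdHom (NM S₁) (NM S₂) f := by
  constructor
  · rintro ⟨h1, h2⟩ x X
    constructor
    · rintro ⟨R₁, hR₁, hsub⟩
      obtain ⟨R₂, hR₂, hb⟩ := h2 x R₁ hR₁
      refine ⟨R₂, hR₂, fun u hu => ?_⟩
      obtain ⟨y, hy, hfy⟩ := hb u hu
      exact hfy ▸ hsub hy
    · rintro ⟨R₂, hR₂, hsub⟩
      obtain ⟨R₁, hR₁, hf⟩ := h1 x R₂ hR₂
      exact ⟨R₁, hR₁, fun y hy => hsub (hf y hy)⟩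
  · intro h
    constructor
    · intro x R₂ hR₂
      obtain ⟨R₁, hR₁, hsub⟩ :=
        (h x {u | R₂ (f x) u}).2 ⟨R₂, hR₂, fun u hu => hu⟩
      exact ⟨R₁, hR₁, fun y hy => hsub hy⟩
    · intro x R₁ hR₁
      obtain ⟨R₂, hR₂, hsub⟩ :=
        (h x {u | ∃ y, R₁ x y ∧ f y = u}).1
          ⟨R₁, hR₁, fun y hy => ⟨y, hy, rfl⟩⟩
      exact ⟨R₂, hR₂, fun u hu => hsub hu⟩
end

section
/- Let κ be a cardinal and Z = (C,𝒩) a κ-complete neighborhood frame. Then H(Z) = (C, {R_v | v ∈ V_Z}) is a κ-downward directed multi-relational Kripke frame; that is, {R_v | v ∈ V_Z} is nonempty and for every family {v_i}_{i∈I} in V_Z with |I| < κ there exists u ∈ V_Z with R_u ⊆ ⋂_{i∈I} R_{v_i}. -/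
universe u

/-- A neighborhood frame `(C,𝒩)` is κ-complete: it includes the whole set, is upward
closed, and is closed under intersections of nonempty subfamilies of size `< κ`. -/
def KComplete {C : Type u} (𝒩 : C → Set (Set C)) (κ : Cardinal.{u}) : Prop :=
  (∀ c : C, Set.univ ∈ 𝒩 c) ∧
  (∀ c : C, ∀ X ∈ 𝒩 c, ∀ Y : Set C, X ⊆ Y → Y ∈ 𝒩 c) ∧
  (∀ (c : C) (T : Set (Set C)), T.Nonempty → T ⊆ 𝒩 c → Cardinal.mk ↥T < κ → ⋂₀ T ∈ 𝒩 c)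

/-- `V_Z` for a neighborhood frame `Z = (C,𝒩)`. -/
def VZ {C : Type*} (𝒩 : C → Set (Set C)) : Set (C → Set C) :=
  {v | ∀ x : C, v x ∈ 𝒩 x}

/-- The relation `R_v` associated with `v : C → 𝒫(C)`. -/
def Rv {C : Type*} (v : C → Set C) : C → C → Prop :=
  fun x y => y ∈ v x

/-- for a κ-complete neighborhood frame `Z = (C,𝒩)`, the pair
`H(Z) = (C, {R_v | v ∈ V_Z})` is a κ-downward directed multi-relational Kripke frame:
the set of relations is nonempty, and every family `{v_i}_{i∈I}` in `V_Z` with `|I| < κ`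
admits `u ∈ V_Z` with `R_u ⊆ ⋂_{i∈I} R_{v_i}`. -/
theorem stmt_6 {C : Type u} [Nonempty C] (κ : Cardinal.{u}) (𝒩 : C → Set (Set C))
    (h : KComplete 𝒩 κ) :
    {R : C → C → Prop | ∃ v ∈ VZ 𝒩, R = Rv v}.Nonempty ∧
    ∀ (I : Type u) (v : I → (C → Set C)), (∀ i, v i ∈ VZ 𝒩) → Cardinal.mk I < κ →
      ∃ u ∈ VZ 𝒩, ∀ x y : C, Rv u x y → ∀ i : I, Rv (v i) x y := by
  obtain ⟨h1, h2, h3⟩ := h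
  constructor
  · exact ⟨Rv (fun _ => Set.univ), ⟨fun _ => Set.univ, fun x => h1 x, rfl⟩⟩
  · intro I v hv hI
    by_cases hne : Nonempty I
    · refine ⟨fun x => ⋂ i, v i x, fun x => ?_, fun x y hxy i => ?_⟩
      · have := h3 x (Set.range (fun i => v i x)) (Set.range_nonempty _)
          (by rintro s ⟨i, rfl⟩; exact hv i x)
          (lt_of_le_of_lt Cardinal.mk_range_le hI)
        rwa [Set.sInter_range] at this
      · exact Set.mem_iInter.mp hxy i
    · exact ⟨fun _ => Set.univ, fun x => h1 x, fun x y _ i => absurd ⟨i⟩ hne⟩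
end

section
/- Let κ be a cardinal, Z₁ = (C₁,𝒩₁) and Z₂ = (C₂,𝒩₂) κ-complete neighborhood frames, and f : C₁ → C₂ a homomorphism of neighborhood frames from Z₁ to Z₂. Then f is a homomorphism of multi-relational Kripke frames from H(Z₁) = (C₁, {R_v | v ∈ V_{Z₁}}) to H(Z₂) = (C₂, {R_v | v ∈ V_{Z₂}}). -/
universe u

/-- a homomorphism of neighborhood frames between κ-complete neighborhood
frames `Z₁`, `Z₂` is a homomorphism of multi-relational Kripke frames `H(Z₁) → H(Z₂)`. -/
theorem stmt_7 {C₁ C₂ : Type u} [Nonempty C₁] [Nonempty C₂] (κ : Cardinal.{u})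
    (𝒩₁ : C₁ → Set (Set C₁)) (𝒩₂ : C₂ → Set (Set C₂))
    (h₁ : KComplete 𝒩₁ κ) (h₂ : KComplete 𝒩₂ κ)
    (f : C₁ → C₂) (hf : NbhdHom 𝒩₁ 𝒩₂ f) :
    MultiHom {R : C₁ → C₁ → Prop | ∃ v ∈ VZ 𝒩₁, R = Rv v}
      {R : C₂ → C₂ → Prop | ∃ v ∈ VZ 𝒩₂, R = Rv v} f := by
  classical
  constructor
  · rintro x R₂ ⟨v₂, hv₂, rfl⟩
    refine ⟨Rv (fun c => f ⁻¹' (v₂ (f c))), ⟨_, fun c => (hf c _).mpr (hv₂ (f c)), rfl⟩, ?_⟩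
    intro y hy
    exact hy
  · rintro x R₁ ⟨v₁, hv₁, rfl⟩
    refine ⟨Rv (fun c => if c = f x then f '' (v₁ x) else Set.univ),
      ⟨_, fun c => ?_, rfl⟩, ?_⟩
    · by_cases hc : c = f x
      · simp only [hc, if_pos rfl]
        subst hc
        have hmem : f ⁻¹' (f '' (v₁ x)) ∈ 𝒩₁ x :=
          h₁.2.1 x (v₁ x) (hv₁ x) _ (Set.subset_preimage_image f (v₁ x))
        exact (hf x _).mp hmem
      · simp only [if_neg hc]
        exact h₂.1 c
    · intro u hu
      simp only [Rv, if_pos rfl] at hu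
      obtain ⟨y, hy, rfl⟩ := hu
      exact ⟨y, hy, rfl⟩
end

section
/- For every multi-relational Kripke frame M = (W,S), the identity map on W is a homomorphism of multi-relational Kripke frames from M to H(N(M)) and also from H(N(M)) to M; hence M is isomorphic to H(N(M)). -/
/-- For every multi-relational Kripke frame `M = (W,S)`, the identity map is
a homomorphism of multi-relational Kripke frames from `M` to `H(N(M))` and from `H(N(M))`
to `M`; hence `M ≅ H(N(M))`. -/
theorem stmt_8 {W : Type*} [Nonempty W] (S : Set (W → W → Prop)) (hS : S.Nonempty) :
    MultiHom S {R : W → W → Prop | ∃ v ∈ VZ (NM S), R = Rv v} (id : W → W) ∧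
    MultiHom {R : W → W → Prop | ∃ v ∈ VZ (NM S), R = Rv v} S (id : W → W) := by
  constructor
  · constructor
    · rintro x R₂ ⟨v, hv, rfl⟩
      obtain ⟨R, hR, hsub⟩ := hv x
      exact ⟨R, hR, fun y hy => hsub hy⟩
    · intro x R₁ hR₁
      refine ⟨Rv (fun x' => {y | R₁ x' y}), ⟨fun x' => {y | R₁ x' y}, fun x' => ⟨R₁, hR₁, fun _ h => h⟩, rfl⟩, ?_⟩
      exact fun u hu => ⟨u, hu, rfl⟩
  · constructor
    · intro x R₂ hR₂
      exact ⟨Rv (fun x' => {y | R₂ x' y}), ⟨fun x' => {y | R₂ x' y}, fun x' => ⟨R₂, hR₂, fun _ h => h⟩, rfl⟩, fun y hy => hy⟩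
    · rintro x R₁ ⟨v, hv, rfl⟩
      obtain ⟨R, hR, hsub⟩ := hv x
      exact ⟨R, hR, fun u hu => ⟨u, hsub hu, rfl⟩⟩
end

section
/- Let Z = (C,𝒩) be a neighborhood frame that includes the whole set and is upward closed. Then for every c ∈ C and every X ⊆ C: X ∈ 𝒩(c) if and only if there exists v ∈ V_Z with R_v[c] ⊆ X; consequently the identity map on C is an isomorphism of neighborhood frames from Z to N(H(Z)). -/
/-- If `Z = (C,𝒩)` includes the whole set and is upward closed, then
`X ∈ 𝒩(c)` iff `R_v[c] ⊆ X` for some `v ∈ V_Z`; consequently the identity map is an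
isomorphism of neighborhood frames from `Z` to `N(H(Z))` (being a bijective
homomorphism). -/
theorem stmt_9 {C : Type*} [Nonempty C] (𝒩 : C → Set (Set C))
    (hwhole : ∀ c : C, Set.univ ∈ 𝒩 c)
    (hup : ∀ c : C, ∀ X ∈ 𝒩 c, ∀ Y : Set C, X ⊆ Y → Y ∈ 𝒩 c) :
    (∀ (c : C) (X : Set C), X ∈ 𝒩 c ↔ ∃ v ∈ VZ 𝒩, {y | Rv v c y} ⊆ X) ∧
    NbhdHom 𝒩 (NM {R : C → C → Prop | ∃ v ∈ VZ 𝒩, R = Rv v}) (id : C → C) := by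
  classical
  have key : ∀ (c : C) (X : Set C), X ∈ 𝒩 c ↔ ∃ v ∈ VZ 𝒩, {y | Rv v c y} ⊆ X := by
    intro c X
    constructor
    · intro hX
      refine ⟨fun x => if x = c then X else Set.univ, ?_, ?_⟩
      · intro x
        by_cases h : x = c <;> simp [h, hX, hwhole x]
      · intro y hy
        simpa [Rv] using hy
    · rintro ⟨v, hv, hsub⟩
      exact hup c (v c) (hv c) X hsub
  refine ⟨key, ?_⟩
  intro c X
  simp only [Set.preimage_id, id]
  rw [key c X]
  constructor
  · rintro ⟨v, hv, hsub⟩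
    exact ⟨Rv v, ⟨v, hv, rfl⟩, hsub⟩
  · rintro ⟨R, ⟨v, hv, rfl⟩, hsub⟩
    exact ⟨v, hv, hsub⟩
end

section
/- Let κ be a cardinal, A a κ-additive complete atomic modal algebra, X ⊆ A with |X| < κ, and a an atom of A. Then for every atom a' of A: a R(X) a' if and only if a' ≰ p(X,a), where p(X,a) = ⨆{x ∈ X | □x ≤ aᶜ}. -/
universe u

/-- Let `A` be a κ-additive complete atomic modal algebra, `X ⊆ A` with
`|X| < κ`, and `a` an atom. Then for every atom `a'`:
`a R(X) a' ↔ a' ≰ p(X,a)`, where `p(X,a) = ⨆{x ∈ X | □x ≤ aᶜ}` and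
`a R(X) a' ↔ ∀ x ∈ X, a' ≤ x → a ≤ □x`. -/
theorem stmt_11 {A : Type u} [CompleteAtomicBooleanAlgebra A] (κ : Cardinal.{u})
    (box : A → A) (hbot : box ⊥ = ⊥) (hor : ∀ x y : A, box (x ⊔ y) = box x ⊔ box y)
    (hadd : ∀ X : Set A, Cardinal.mk ↥X < κ → box (sSup X) = sSup (box '' X))
    (X : Set A) (hX : Cardinal.mk ↥X < κ)
    (a : A) (ha : IsAtom a) (a' : A) (ha' : IsAtom a') :
    (∀ x ∈ X, a' ≤ x → a ≤ box x) ↔ ¬ a' ≤ sSup {x ∈ X | box x ≤ aᶜ} := by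
  constructor
  · intro h hle
    -- atom a' is completely join-prime
    have h1 : a' = ⨆ y ∈ {x ∈ X | box x ≤ aᶜ}, a' ⊓ y := by
      rw [← inf_sSup_eq, inf_eq_left.mpr hle]
    have h2 : ∃ y ∈ {x ∈ X | box x ≤ aᶜ}, a' ⊓ y ≠ ⊥ := by
      by_contra hc
      push_neg at hc
      apply ha'.1
      rw [h1]
      exact le_bot_iff.mp (iSup₂_le fun y hy => le_of_eq (hc y hy))
    obtain ⟨y, ⟨hyX, hy⟩, hne⟩ := h2
    have hle' : a' ≤ y := by
      rcases (ha'.le_iff.mp (inf_le_left : a' ⊓ y ≤ a')) with h0 | h0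
      · exact absurd h0 hne
      · exact inf_eq_left.mp h0
    have hab : a ≤ aᶜ := (h y hyX hle').trans hy
    exact ha.1 (le_bot_iff.mp (by simpa using le_inf (le_refl a) hab))
  · intro h x hxX hle
    rcases (ha.le_iff.mp (inf_le_left : a ⊓ box x ≤ a)) with h0 | h0
    · exfalso
      apply h
      have hbx : box x ≤ aᶜ :=
        (disjoint_iff.mpr h0).symm.le_compl_right
      exact hle.trans (le_sSup ⟨hxX, hbx⟩)
    · exact inf_eq_left.mp h0
end

section
/- Let κ be a cardinal, A and B κ-additive complete atomic modal algebras, f : A → B a homomorphism of complete modal algebras, Y ⊆ B with |Y| < κ, and b an atom of B. Set p(Y,b) = ⨆{y ∈ Y | □y ≤ bᶜ}, f♯(z) = ⨆{x ∈ A | f(x) ≤ z}, and f♭(b) = ⨅{x ∈ A | b ≤ f(x)}. Then for every atom a of A: f♭(b) R({f♯(p(Y,b))}) a if and only if a ≰ f♯(p(Y,b)). -/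
universe u

/-- Let `A`, `B` be κ-additive complete atomic modal algebras,
`f : A → B` a homomorphism of complete modal algebras, `Y ⊆ B` with `|Y| < κ`, and `b` an
atom of `B`. With `p = p(Y,b) = ⨆{y ∈ Y | □y ≤ bᶜ}`, `f♯(p) = ⨆{x | f x ≤ p}` and
`f♭(b) = ⨅{x | b ≤ f x}`, for every atom `a` of `A`:
`f♭(b) R({f♯(p)}) a ↔ a ≰ f♯(p)`. -/
theorem stmt_12 {A B : Type u} [CompleteAtomicBooleanAlgebra A] [CompleteAtomicBooleanAlgebra B]
    (κ : Cardinal.{u})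
    (boxA : A → A) (boxB : B → B)
    (hbotA : boxA ⊥ = ⊥) (horA : ∀ x y : A, boxA (x ⊔ y) = boxA x ⊔ boxA y)
    (haddA : ∀ X : Set A, Cardinal.mk ↥X < κ → boxA (sSup X) = sSup (boxA '' X))
    (hbotB : boxB ⊥ = ⊥) (horB : ∀ x y : B, boxB (x ⊔ y) = boxB x ⊔ boxB y)
    (haddB : ∀ Y : Set B, Cardinal.mk ↥Y < κ → boxB (sSup Y) = sSup (boxB '' Y))
    (f : A → B)
    (hsup : ∀ x y : A, f (x ⊔ y) = f x ⊔ f y)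
    (hinf : ∀ x y : A, f (x ⊓ y) = f x ⊓ f y)
    (hcompl : ∀ x : A, f xᶜ = (f x)ᶜ)
    (hsSup : ∀ X : Set A, f (sSup X) = sSup (f '' X))
    (hsInf : ∀ X : Set A, f (sInf X) = sInf (f '' X))
    (hbox : ∀ x : A, f (boxA x) = boxB (f x))
    (Y : Set B) (hY : Cardinal.mk ↥Y < κ)
    (b : B) (hb : IsAtom b)
    (p : B) (hp : p = sSup {y ∈ Y | boxB y ≤ bᶜ})
    (fsharp : A) (hfsharp : fsharp = sSup {x : A | f x ≤ p})
    (fflat : A) (hfflat : fflat = sInf {x : A | b ≤ f x})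
    (a : A) (ha : IsAtom a) :
    (∀ x ∈ ({fsharp} : Set A), a ≤ x → fflat ≤ boxA x) ↔ ¬ a ≤ fsharp := by
  have fmono : ∀ x y : A, x ≤ y → f x ≤ f y := by
    intro x y hxy
    have : f x ⊔ f y = f y := by rw [← hsup, sup_eq_right.mpr hxy]
    exact le_of_sup_eq this
  have boxBmono : ∀ x y : B, x ≤ y → boxB x ≤ boxB y := by
    intro x y hxy
    have : boxB x ⊔ boxB y = boxB y := by rw [← horB, sup_eq_right.mpr hxy]
    exact le_of_sup_eq this
  -- key: fflat ≤ boxA fsharp is false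
  have key : ¬ fflat ≤ boxA fsharp := by
    intro hle
    -- f fsharp ≤ p
    have hfsp : f fsharp ≤ p := by
      rw [hfsharp, hsSup]
      apply sSup_le
      rintro _ ⟨x, hx, rfl⟩
      exact hx
    -- boxB p ≤ bᶜ
    have hboxp : boxB p ≤ bᶜ := by
      have hcard : Cardinal.mk ↥{y ∈ Y | boxB y ≤ bᶜ} < κ :=
        lt_of_le_of_lt (Cardinal.mk_le_mk_of_subset (Set.sep_subset _ _)) hY
      rw [hp, haddB _ hcard]
      apply sSup_le
      rintro _ ⟨y, hy, rfl⟩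
      exact hy.2
    -- b ≤ f fflat
    have hbf : b ≤ f fflat := by
      rw [hfflat, hsInf]
      apply le_sInf
      rintro _ ⟨x, hx, rfl⟩
      exact hx
    have : b ≤ bᶜ :=
      hbf.trans ((fmono _ _ hle).trans (by
        rw [hbox]
        exact (boxBmono _ _ hfsp).trans hboxp))
    have : b = ⊥ := by
      have := le_inf this le_rfl
      simpa [inf_comm] using this
    exact hb.1 this
  constructor
  · intro H hafs
    exact key (H fsharp rfl hafs)
  · intro hna x hx hax
    rw [Set.mem_singleton_iff] at hx
    exact absurd (hx ▸ hax) hna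
end

section
/- Let κ be a regular cardinal, A and B nontrivial κ-additive complete atomic modal algebras, and f : A → B a homomorphism of complete modal algebras. Then the map b ↦ f♭(b) = ⨅{x ∈ A | b ≤ f(x)} from the atoms of B to the atoms of A is a homomorphism of multi-relational Kripke frames from F(B) = (atoms(B), {R(Y) | Y ⊆ B, |Y| < κ}) to F(A) = (atoms(A), {R(X) | X ⊆ A, |X| < κ}). -/
universe u

/-- Atoms in a frame are sup-prime. -/
lemma atom_le_sSup_aux {α : Type*} [Order.Frame α] {a : α} (ha : IsAtom a) {S : Set α}
    (h : a ≤ sSup S) : ∃ s ∈ S, a ≤ s := by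
  by_contra hc
  push_neg at hc
  have hbot : ∀ s ∈ S, a ⊓ s = ⊥ := by
    intro s hs
    rcases eq_or_lt_of_le (inf_le_left : a ⊓ s ≤ a) with he | hl
    · exact absurd (he ▸ inf_le_right) (hc s hs)
    · exact ha.2 _ hl
  have h1 : a ⊓ sSup S = a := inf_eq_left.mpr h
  rw [inf_sSup_eq] at h1
  have h2 : (⨆ s ∈ S, a ⊓ s) ≤ ⊥ := iSup₂_le fun s hs => (hbot s hs).le
  exact ha.1 (le_bot_iff.mp (h1 ▸ h2))

/-- Let κ be a regular cardinal, `A`, `B` nontrivial κ-additive complete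
atomic modal algebras and `f : A → B` a homomorphism of complete modal algebras. Then the
map `b ↦ f♭(b) = ⨅{x | b ≤ f x}` from atoms of `B` to atoms of `A` is a homomorphism of
multi-relational Kripke frames from `F(B) = (atoms B, {R(Y) | Y ⊆ B, |Y| < κ})` to
`F(A) = (atoms A, {R(X) | X ⊆ A, |X| < κ})`. -/
theorem stmt_13 {A B : Type u} [CompleteAtomicBooleanAlgebra A] [CompleteAtomicBooleanAlgebra B]
    [Nontrivial A] [Nontrivial B]
    (κ : Cardinal.{u}) (hreg : κ.IsRegular)
    (boxA : A → A) (boxB : B → B)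
    (hbotA : boxA ⊥ = ⊥) (horA : ∀ x y : A, boxA (x ⊔ y) = boxA x ⊔ boxA y)
    (haddA : ∀ X : Set A, Cardinal.mk ↥X < κ → boxA (sSup X) = sSup (boxA '' X))
    (hbotB : boxB ⊥ = ⊥) (horB : ∀ x y : B, boxB (x ⊔ y) = boxB x ⊔ boxB y)
    (haddB : ∀ Y : Set B, Cardinal.mk ↥Y < κ → boxB (sSup Y) = sSup (boxB '' Y))
    (f : A → B)
    (hsup : ∀ x y : A, f (x ⊔ y) = f x ⊔ f y)
    (hinf : ∀ x y : A, f (x ⊓ y) = f x ⊓ f y)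
    (hcompl : ∀ x : A, f xᶜ = (f x)ᶜ)
    (hsSup : ∀ X : Set A, f (sSup X) = sSup (f '' X))
    (hsInf : ∀ X : Set A, f (sInf X) = sInf (f '' X))
    (hbox : ∀ x : A, f (boxA x) = boxB (f x))
    (g : {b : B // IsAtom b} → {a : A // IsAtom a})
    (hg : ∀ b : {b : B // IsAtom b}, (g b).1 = sInf {x : A | b.1 ≤ f x}) :
    MultiHom
      {R : {b : B // IsAtom b} → {b : B // IsAtom b} → Prop |
        ∃ Y : Set B, Cardinal.mk ↥Y < κ ∧
          R = fun b c => ∀ y ∈ Y, c.1 ≤ y → b.1 ≤ boxB y}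
      {R : {a : A // IsAtom a} → {a : A // IsAtom a} → Prop |
        ∃ X : Set A, Cardinal.mk ↥X < κ ∧
          R = fun a c => ∀ x ∈ X, c.1 ≤ x → a.1 ≤ boxA x}
      g := by
  -- f is monotone
  have fmono : ∀ {x y : A}, x ≤ y → f x ≤ f y := by
    intro x y h
    have h1 : f (x ⊓ y) = f x := by rw [inf_eq_left.mpr h]
    rw [hinf] at h1
    exact inf_eq_left.mp h1
  -- boxB is monotone
  have boxBmono : ∀ {x y : B}, x ≤ y → boxB x ≤ boxB y := by
    intro x y h
    have h1 : boxB (x ⊔ y) = boxB x ⊔ boxB y := horB x y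
    rw [sup_eq_right.mpr h] at h1
    exact le_sup_left.trans h1.ge
  -- b ≤ f (g b)
  have hgb : ∀ b : {b : B // IsAtom b}, b.1 ≤ f (g b).1 := by
    intro b
    rw [hg, hsInf]
    refine le_sInf ?_
    rintro _ ⟨x, hx, rfl⟩
    exact hx
  -- adjunction
  have adj : ∀ (b : {b : B // IsAtom b}) (x : A), b.1 ≤ f x → (g b).1 ≤ x := by
    intro b x h
    rw [hg]
    exact sInf_le h
  have adj' : ∀ (b : {b : B // IsAtom b}) (x : A), (g b).1 ≤ x → b.1 ≤ f x := by
    intro b x h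
    exact (hgb b).trans (fmono h)
  constructor
  · -- forth condition
    rintro b R₂ ⟨X, hX, rfl⟩
    refine ⟨_, ⟨f '' X, lt_of_le_of_lt Cardinal.mk_image_le hX, rfl⟩, ?_⟩
    intro c hRc x hx hcx
    have h1 : c.1 ≤ f x := (hgb c).trans (fmono hcx)
    have h2 : b.1 ≤ boxB (f x) := hRc (f x) ⟨x, hx, rfl⟩ h1
    have h3 : b.1 ≤ f (boxA x) := by rw [hbox]; exact h2
    exact adj b _ h3
  · -- back condition
    rintro b R₁ ⟨Y, hY, rfl⟩
    set Yb : Set B := {y ∈ Y | ¬ b.1 ≤ boxB y} with hYb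
    set s : B := sSup Yb with hs
    set t : A := sSup {x : A | f x ≤ s} with ht
    have hcard : Cardinal.mk ↥({t} : Set A) < κ := by
      rw [Cardinal.mk_singleton]
      exact lt_of_lt_of_le Cardinal.one_lt_aleph0 hreg.aleph0_le
    refine ⟨_, ⟨{t}, hcard, rfl⟩, ?_⟩
    intro u hu
    have hft : f t ≤ s := by
      rw [ht, hsSup]
      refine sSup_le ?_
      rintro _ ⟨x, hx, rfl⟩
      exact hx
    have hbs : ¬ b.1 ≤ boxB s := by
      intro h
      have hcardYb : Cardinal.mk ↥Yb < κ :=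
        lt_of_le_of_lt (Cardinal.mk_le_mk_of_subset (Set.sep_subset _ _)) hY
      rw [hs, haddB Yb hcardYb] at h
      obtain ⟨z, ⟨y, ⟨hyY, hyb⟩, rfl⟩, hbz⟩ := atom_le_sSup_aux b.2 h
      exact hyb hbz
    have hgt : ¬ (g b).1 ≤ boxA t := by
      intro h
      have h1 : b.1 ≤ f (boxA t) := adj' b _ h
      rw [hbox] at h1
      exact hbs (h1.trans (boxBmono hft))
    have hut : ¬ u.1 ≤ t := fun h => hgt (hu t rfl h)
    have hfu : ¬ f u.1 ≤ s := fun h => hut (le_sSup h)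
    have hne : f u.1 ⊓ sᶜ ≠ ⊥ := by
      intro h
      rw [← sdiff_eq] at h
      exact hfu (sdiff_eq_bot_iff.mp h)
    obtain ⟨c, hc, hcle⟩ := (eq_bot_or_exists_atom_le (f u.1 ⊓ sᶜ)).resolve_left hne
    refine ⟨⟨c, hc⟩, ?_, ?_⟩
    · intro y hyY hcy
      by_contra hb
      have h1 : y ≤ s := le_sSup ⟨hyY, hb⟩
      have h2 : c ≤ s ⊓ sᶜ := le_inf (hcy.trans h1) (hcle.trans inf_le_right)
      rw [inf_compl_eq_bot] at h2
      exact hc.1 (le_bot_iff.mp h2)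
    · have h1 : c ≤ f u.1 := hcle.trans inf_le_left
      have h2 : (g ⟨c, hc⟩).1 ≤ u.1 := adj _ _ h1
      refine Subtype.ext ?_
      rcases (u.2.le_iff).mp h2 with h | h
      · exact absurd h (g ⟨c, hc⟩).2.1
      · exact h
end

section
/- Let κ be an infinite cardinal and M = (W,S) a κ-downward directed multi-relational Kripke frame. Define □_M : 𝒫(W) → 𝒫(W) by □_M X = ⋂_{R∈S} ⟨R⟩X, where ⟨R⟩X = {w ∈ W | w R x for some x ∈ X}. Then □_M ∅ = ∅, and for every family {X_i}_{i∈I} of subsets of W with |I| < κ one has □_M(⋃_{i∈I} X_i) = ⋃_{i∈I} □_M X_i. In particular, the powerset Boolean algebra of W with operator □_M is a κ-additive complete atomic modal algebra. -/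
universe u

/-- The modal operator `□_M X = ⋂_{R∈S} ⟨R⟩X` on the powerset of `W`, where
`⟨R⟩X = {w | w R x for some x ∈ X}`. -/
def boxM {W : Type*} (S : Set (W → W → Prop)) : Set W → Set W :=
  fun X => {w | ∀ R ∈ S, ∃ x ∈ X, R w x}

lemma boxM_iUnion {W : Type u} (κ : Cardinal.{u})
    (S : Set (W → W → Prop)) (hdd : DownDirected S κ)
    (I : Type u) (X : I → Set W) (hI : Cardinal.mk I < κ) :
    boxM S (⋃ i, X i) = ⋃ i, boxM S (X i) := by
  ext w
  simp only [boxM, Set.mem_setOf_eq, Set.mem_iUnion]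
  constructor
  · intro hw
    by_contra hc
    push_neg at hc
    -- for each i, choose a relation witnessing failure
    choose f hfS hf using hc
    have hsub : Set.range f ⊆ S := by rintro _ ⟨i, rfl⟩; exact hfS i
    have hcard : Cardinal.mk ↥(Set.range f) < κ :=
      lt_of_le_of_lt Cardinal.mk_range_le hI
    obtain ⟨R, hRS, hR⟩ := hdd (Set.range f) hsub hcard
    obtain ⟨x, hx, hRx⟩ := hw R hRS
    obtain ⟨i, hxi⟩ := hx
    exact hf i x hxi (hR w x hRx (f i) ⟨i, rfl⟩)
  · rintro ⟨i, hi⟩ R hRS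
    obtain ⟨x, hx, hRx⟩ := hi R hRS
    exact ⟨x, ⟨i, hx⟩, hRx⟩

/-- For an infinite cardinal κ and a κ-downward directed multi-relational
Kripke frame `M = (W,S)`, the operator `□_M` satisfies `□_M ∅ = ∅` and distributes over
unions of families of size `< κ`; in particular the powerset of `W` with `□_M` is a
κ-additive complete atomic modal algebra. -/
theorem stmt_14 {W : Type u} [Nonempty W] (κ : Cardinal.{u}) (hκ : Cardinal.aleph0 ≤ κ)
    (S : Set (W → W → Prop)) (hS : S.Nonempty) (hdd : DownDirected S κ) :
    boxM S ∅ = ∅ ∧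
    (∀ (I : Type u) (X : I → Set W), Cardinal.mk I < κ →
      boxM S (⋃ i, X i) = ⋃ i, boxM S (X i)) ∧
    (∀ x y : Set W, boxM S (x ⊔ y) = boxM S x ⊔ boxM S y) ∧
    (∀ 𝒳 : Set (Set W), Cardinal.mk ↥𝒳 < κ → boxM S (sSup 𝒳) = sSup (boxM S '' 𝒳)) := by
  obtain ⟨R₀, hR₀⟩ := hS
  refine ⟨?_, fun I X hI => boxM_iUnion κ S hdd I X hI, ?_, ?_⟩
  · ext w
    simp only [boxM, Set.mem_setOf_eq, Set.mem_empty_iff_false, iff_false, not_forall]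
    exact ⟨R₀, hR₀, by simp⟩
  · intro x y
    have h2 : Cardinal.mk (ULift.{u} Bool) < κ :=
      lt_of_lt_of_le (Cardinal.lt_aleph0_of_finite _) hκ
    have := boxM_iUnion κ S hdd (ULift.{u} Bool)
      (fun b => if b.down then x else y) h2
    have hx : (⋃ b : ULift.{u} Bool, if b.down then x else y) = x ⊔ y := by
      ext w
      simp only [Set.mem_iUnion, Set.sup_eq_union, Set.mem_union]
      constructor
      · rintro ⟨⟨b⟩, hb⟩; cases b <;> simp_all
      · rintro (h | h)
        · exact ⟨⟨true⟩, by simpa⟩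
        · exact ⟨⟨false⟩, by simpa⟩
    have hy : (⋃ b : ULift.{u} Bool, boxM S (if b.down then x else y)) =
        boxM S x ⊔ boxM S y := by
      ext w
      simp only [Set.mem_iUnion, Set.sup_eq_union, Set.mem_union]
      constructor
      · rintro ⟨⟨b⟩, hb⟩; cases b <;> simp_all
      · rintro (h | h)
        · exact ⟨⟨true⟩, by simpa⟩
        · exact ⟨⟨false⟩, by simpa⟩
    rw [hx, hy] at this
    exact this
  · intro 𝒳 h𝒳
    have := boxM_iUnion κ S hdd ↥𝒳 (fun X => (X : Set W)) h𝒳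
    rw [show (⋃ X : ↥𝒳, (X : Set W)) = sSup 𝒳 by
      simp [Set.sSup_eq_sUnion, Set.sUnion_eq_iUnion]] at this
    rw [this]
    ext w
    simp [Set.sSup_eq_sUnion, Set.sUnion_image]
end

section
/- Let M₁ = (W₁,S₁) and M₂ = (W₂,S₂) be κ-downward directed multi-relational Kripke frames (κ a cardinal) and g : W₁ → W₂ a homomorphism of multi-relational Kripke frames from M₁ to M₂. Then for every U ⊆ W₂: ⋂_{R∈S₁} ⟨R⟩(g⁻¹[U]) = g⁻¹[⋂_{Q∈S₂} ⟨Q⟩U], where ⟨R⟩X = {w | w R x for some x ∈ X}. Equivalently, □_{M₁}(g⁻¹[U]) = g⁻¹[□_{M₂} U] where □_M X = ⋂_{R∈S} ⟨R⟩X. -/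
universe u

/-- for a homomorphism `g : M₁ → M₂` of κ-downward directed
multi-relational Kripke frames and every `U ⊆ W₂`:
`□_{M₁}(g⁻¹[U]) = g⁻¹[□_{M₂} U]`. -/
theorem stmt_15 {W₁ W₂ : Type u} [Nonempty W₁] [Nonempty W₂] (κ : Cardinal.{u})
    (S₁ : Set (W₁ → W₁ → Prop)) (S₂ : Set (W₂ → W₂ → Prop))
    (hS₁ : S₁.Nonempty) (hS₂ : S₂.Nonempty)
    (hdd₁ : DownDirected S₁ κ) (hdd₂ : DownDirected S₂ κ)
    (g : W₁ → W₂) (hg : MultiHom S₁ S₂ g)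
    (U : Set W₂) :
    boxM S₁ (g ⁻¹' U) = g ⁻¹' (boxM S₂ U) := by
  ext w
  constructor
  · intro hw Q hQ
    obtain ⟨R₁, hR₁, hmap⟩ := hg.1 w Q hQ
    obtain ⟨x, hx, hRx⟩ := hw R₁ hR₁
    exact ⟨g x, hx, hmap x hRx⟩
  · intro hw R₁ hR₁
    obtain ⟨R₂, hR₂, hback⟩ := hg.2 w R₁ hR₁
    obtain ⟨u, hu, hRu⟩ := hw R₂ hR₂
    obtain ⟨y, hy, rfl⟩ := hback u hRu
    exact ⟨y, hu, hy⟩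
end

section
/- Let κ be a regular cardinal and A a nontrivial κ-additive complete atomic modal algebra. Then for every x ∈ A: {a ∈ atoms(A) | a ≤ □x} = ⋂_{X ⊆ A, |X| < κ} {a ∈ atoms(A) | there exists an atom b of A with b ≤ x and a R(X) b}. Consequently, the map τ(x) = {a ∈ atoms(A) | a ≤ x} is an isomorphism of complete modal algebras from A onto the powerset algebra of atoms(A) equipped with the operator Y ↦ ⋂_{X ⊆ A, |X| < κ} ⟨R(X)⟩Y, where ⟨R⟩Y = {a | a R b for some b ∈ Y}. -/
universe u

section aux
variable {A : Type u} [CompleteAtomicBooleanAlgebra A]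

lemma atom_le_sSup_exists {a : A} (ha : IsAtom a) {S : Set A} (h : a ≤ sSup S) :
    ∃ s ∈ S, a ≤ s := by
  by_contra hc
  push_neg at hc
  have h2 : a = a ⊓ sSup S := (inf_eq_left.2 h).symm
  rw [inf_sSup_eq] at h2
  have h3 : ∀ s ∈ S, a ⊓ s = ⊥ := by
    intro s hs
    rcases ha.le_iff.1 (inf_le_left : a ⊓ s ≤ a) with h' | h'
    · exact h'
    · exact absurd (h' ▸ inf_le_right) (hc s hs)
  have hb : a ≤ ⊥ := by
    rw [h2]
    exact iSup₂_le fun s hs => (h3 s hs).le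
  exact ha.1 (le_bot_iff.1 hb)

lemma atom_not_le_iff {a x : A} (ha : IsAtom a) : ¬ a ≤ x ↔ a ≤ xᶜ := by
  constructor
  · intro h
    rcases ha.le_iff.1 (inf_le_left : a ⊓ x ≤ a) with h' | h'
    · exact le_compl_iff_disjoint_right.2 (disjoint_iff.2 h')
    · exact absurd (h' ▸ inf_le_right) h
  · intro h h'
    exact ha.1 (le_bot_iff.1 (le_inf h' h |>.trans_eq (inf_compl_eq_bot)))

end aux

/-- Let κ be regular and `A` a nontrivial κ-additive complete atomic modal
algebra. Then for every `x`, the atoms below `□x` are exactly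
`⋂_{X ⊆ A, |X| < κ} ⟨R(X)⟩{b atom | b ≤ x}`; consequently `τ(x) = {a atom | a ≤ x}` is an
isomorphism of complete modal algebras from `A` onto the powerset of the atoms of `A`
equipped with the operator `Y ↦ ⋂_{X ⊆ A, |X| < κ} ⟨R(X)⟩Y`. -/
theorem stmt_16 {A : Type u} [CompleteAtomicBooleanAlgebra A] [Nontrivial A]
    (κ : Cardinal.{u}) (hreg : κ.IsRegular)
    (box : A → A) (hbot : box ⊥ = ⊥) (hor : ∀ x y : A, box (x ⊔ y) = box x ⊔ box y)
    (hadd : ∀ X : Set A, Cardinal.mk ↥X < κ → box (sSup X) = sSup (box '' X))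
    (τ : A → Set {a : A // IsAtom a}) (hτ : ∀ x : A, τ x = {a | a.1 ≤ x})
    (boxOp : Set {a : A // IsAtom a} → Set {a : A // IsAtom a})
    (hboxOp : ∀ Y : Set {a : A // IsAtom a},
      boxOp Y = ⋂ (X : Set A) (_ : Cardinal.mk ↥X < κ),
        {a : {a : A // IsAtom a} | ∃ b ∈ Y, ∀ x ∈ X, b.1 ≤ x → a.1 ≤ box x}) :
    (∀ x : A, {a : {a : A // IsAtom a} | a.1 ≤ box x} =
      ⋂ (X : Set A) (_ : Cardinal.mk ↥X < κ),
        {a : {a : A // IsAtom a} |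
          ∃ b : {a : A // IsAtom a}, b.1 ≤ x ∧ ∀ z ∈ X, b.1 ≤ z → a.1 ≤ box z}) ∧
    Function.Bijective τ ∧
    τ ⊥ = ⊥ ∧ τ ⊤ = ⊤ ∧
    (∀ x y : A, τ (x ⊔ y) = τ x ⊔ τ y) ∧
    (∀ x y : A, τ (x ⊓ y) = τ x ⊓ τ y) ∧
    (∀ x : A, τ xᶜ = (τ x)ᶜ) ∧
    (∀ X : Set A, τ (sSup X) = sSup (τ '' X)) ∧
    (∀ X : Set A, τ (sInf X) = sInf (τ '' X)) ∧
    (∀ x : A, τ (box x) = boxOp (τ x)) := by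
  have hmono : ∀ {x y : A}, x ≤ y → box x ≤ box y := by
    intro x y hxy
    have : box y = box x ⊔ box y := by rw [← hor, sup_eq_right.2 hxy]
    rw [this]; exact le_sup_left
  -- main statement
  have main : ∀ x : A, {a : {a : A // IsAtom a} | a.1 ≤ box x} =
      ⋂ (X : Set A) (_ : Cardinal.mk ↥X < κ),
        {a : {a : A // IsAtom a} |
          ∃ b : {a : A // IsAtom a}, b.1 ≤ x ∧ ∀ z ∈ X, b.1 ≤ z → a.1 ≤ box z} := by
    intro x
    ext a
    simp only [Set.mem_setOf_eq, Set.mem_iInter]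
    constructor
    · intro h X hX
      set X' : Set A := {z ∈ X | ¬ a.1 ≤ box z} with hX'def
      have hX' : Cardinal.mk ↥X' < κ :=
        lt_of_le_of_lt (Cardinal.mk_le_mk_of_subset (Set.sep_subset _ _)) hX
      have hnle : ¬ x ≤ sSup X' := by
        intro hle
        have : a.1 ≤ sSup (box '' X') := by
          rw [← hadd X' hX']
          exact h.trans (hmono hle)
        obtain ⟨s, hs, has⟩ := atom_le_sSup_exists a.2 this
        obtain ⟨z, hz, rfl⟩ := hs
        exact hz.2 has
      have hne : x ⊓ (sSup X')ᶜ ≠ ⊥ := by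
        intro hb
        apply hnle
        rwa [← sdiff_eq_bot_iff, sdiff_eq]
      obtain ⟨b, hb, hble⟩ := (eq_bot_or_exists_atom_le (x ⊓ (sSup X')ᶜ)).resolve_left hne
      refine ⟨⟨b, hb⟩, hble.trans inf_le_left, ?_⟩
      intro z hz hbz
      by_contra hcon
      have hzX' : z ∈ X' := ⟨hz, hcon⟩
      have h1 : b ≤ sSup X' := hbz.trans (le_sSup hzX')
      have h2 : b ≤ (sSup X')ᶜ := hble.trans inf_le_right
      exact hb.1 (le_bot_iff.1 ((le_inf h1 h2).trans_eq inf_compl_eq_bot))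
    · intro h
      have h1 : Cardinal.mk ↥({x} : Set A) < κ := by
        rw [Cardinal.mk_singleton]
        exact lt_of_lt_of_le Cardinal.one_lt_aleph0 hreg.aleph0_le
      obtain ⟨b, hbx, hb⟩ := h {x} h1
      exact hb x (Set.mem_singleton x) hbx
  refine ⟨main, ?_, ?_, ?_, ?_, ?_, ?_, ?_, ?_, ?_⟩
  · constructor
    · intro x y hxy
      have hx : sSup {b : A | IsAtom b ∧ b ≤ x} = x := sSup_atoms_le_eq x
      have hy : sSup {b : A | IsAtom b ∧ b ≤ y} = y := sSup_atoms_le_eq y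
      have hset : {b : A | IsAtom b ∧ b ≤ x} = {b : A | IsAtom b ∧ b ≤ y} := by
        ext b
        simp only [Set.mem_setOf_eq]
        constructor
        · rintro ⟨hb, hbx⟩
          have : (⟨b, hb⟩ : {a : A // IsAtom a}) ∈ τ x := by rw [hτ]; exact hbx
          rw [hxy, hτ] at this
          exact ⟨hb, this⟩
        · rintro ⟨hb, hby⟩
          have : (⟨b, hb⟩ : {a : A // IsAtom a}) ∈ τ y := by rw [hτ]; exact hby
          rw [← hxy, hτ] at this
          exact ⟨hb, this⟩
      rw [← hx, ← hy, hset]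
    · intro S
      refine ⟨sSup (Subtype.val '' S), ?_⟩
      rw [hτ]
      ext a
      simp only [Set.mem_setOf_eq]
      constructor
      · intro h
        obtain ⟨s, hs, has⟩ := atom_le_sSup_exists a.2 h
        obtain ⟨b, hbS, rfl⟩ := hs
        have : a.1 = b.1 := (b.2.le_iff.1 has).resolve_left a.2.1
        have : a = b := Subtype.ext this
        rwa [this]
      · intro h
        exact le_sSup ⟨a, h, rfl⟩
  · rw [hτ]; ext a; simpa using a.2.1
  · rw [hτ]; ext a; simp
  · intro x y
    rw [hτ, hτ, hτ]
    ext a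
    simp only [Set.mem_setOf_eq, Set.sup_eq_union, Set.mem_union]
    constructor
    · intro h
      by_cases hx : a.1 ≤ x
      · exact Or.inl hx
      · right
        have hc : a.1 ≤ xᶜ := (atom_not_le_iff a.2).1 hx
        calc a.1 ≤ (x ⊔ y) ⊓ xᶜ := le_inf h hc
          _ ≤ y := by rw [inf_sup_right]; simp
    · rintro (h | h)
      · exact h.trans le_sup_left
      · exact h.trans le_sup_right
  · intro x y
    rw [hτ, hτ, hτ]
    ext a
    simp [le_inf_iff]
  · intro x
    rw [hτ, hτ]
    ext a
    simp only [Set.mem_setOf_eq, Set.mem_compl_iff]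
    exact (atom_not_le_iff a.2).symm
  · intro X
    ext a
    rw [hτ]
    simp only [Set.mem_setOf_eq, Set.sSup_eq_sUnion, Set.mem_sUnion]
    constructor
    · intro h
      obtain ⟨s, hs, has⟩ := atom_le_sSup_exists a.2 h
      exact ⟨τ s, ⟨s, hs, rfl⟩, by rw [hτ]; exact has⟩
    · rintro ⟨t, ⟨s, hs, rfl⟩, hat⟩
      rw [hτ] at hat
      exact le_trans hat (le_sSup hs)
  · intro X
    ext a
    rw [hτ]
    simp only [Set.mem_setOf_eq, Set.sInf_eq_sInter, Set.mem_sInter]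
    constructor
    · rintro h t ⟨s, hs, rfl⟩
      rw [hτ]
      exact h.trans (sInf_le hs)
    · intro h
      refine le_sInf fun s hs => ?_
      have := h (τ s) ⟨s, hs, rfl⟩
      rwa [hτ] at this
  · intro x
    rw [hτ, hboxOp, main x]
    apply Set.iInter_congr; intro X
    apply Set.iInter_congr; intro hX
    ext a
    simp only [Set.mem_setOf_eq]
    constructor
    · rintro ⟨b, hbx, hb⟩
      exact ⟨b, by rw [hτ]; exact hbx, hb⟩
    · rintro ⟨b, hbx, hb⟩
      rw [hτ] at hbx
      exact ⟨b, hbx, hb⟩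
end

section
/- Let κ be a regular cardinal and M = (W,S) a κ-downward directed multi-relational Kripke frame. Define □_M X = ⋂_{R∈S} ⟨R⟩X for X ⊆ W, where ⟨R⟩X = {w | w R x for some x ∈ X}, and for each U ⊆ 𝒫(W) with |U| < κ define the binary relation R(U) on W by: w₁ R(U) w₂ iff for every X ∈ U with w₂ ∈ X one has w₁ ∈ □_M X. Then the identity map on W is a homomorphism of multi-relational Kripke frames from (W,S) to (W, {R(U) | U ⊆ 𝒫(W), |U| < κ}) and also from (W, {R(U) | U ⊆ 𝒫(W), |U| < κ}) to (W,S); hence these two frames are isomorphic. -/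
universe u

/-- The relation `R(U)` on `W` determined by a family `U` of subsets of `W`:
`w₁ R(U) w₂` iff for every `X ∈ U` with `w₂ ∈ X` one has `w₁ ∈ □_M X`. -/
def RU {W : Type*} (S : Set (W → W → Prop)) (U : Set (Set W)) : W → W → Prop :=
  fun w₁ w₂ => ∀ X ∈ U, w₂ ∈ X → w₁ ∈ boxM S X


private lemma key_lemma {W : Type u} (κ : Cardinal.{u}) (S : Set (W → W → Prop))
    (hdd : DownDirected S κ) (x : W) (U : Set (Set W)) (hU : Cardinal.mk ↥U < κ) :
    ∃ R ∈ S, ∀ u : W, R x u → RU S U x u := by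
  classical
  set B : Set (Set W) := {X ∈ U | x ∉ boxM S X} with hB
  have hpick : ∀ X : B, ∃ R ∈ S, ∀ z ∈ (X : Set W), ¬ R x z := by
    rintro ⟨X, hXU, hXbox⟩
    by_contra h
    push_neg at h
    exact hXbox (fun R hR => by
      obtain ⟨z, hz, hRz⟩ := h R hR
      exact ⟨z, hz, hRz⟩)
  choose g hgS hg using hpick
  have hsub : Set.range g ⊆ S := by rintro R ⟨X, rfl⟩; exact hgS X
  have hcard : Cardinal.mk ↥(Set.range g) < κ := by
    refine lt_of_le_of_lt (Cardinal.mk_range_le.trans ?_) hU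
    exact Cardinal.mk_le_mk_of_subset (Set.sep_subset _ _)
  obtain ⟨R, hRS, hR⟩ := hdd (Set.range g) hsub hcard
  refine ⟨R, hRS, fun u hRu X hXU hu => ?_⟩
  by_cases hbox : x ∈ boxM S X
  · exact hbox
  · have hXB : X ∈ B := ⟨hXU, hbox⟩
    have := hR x u hRu (g ⟨X, hXB⟩) ⟨⟨X, hXB⟩, rfl⟩
    exact absurd this (hg ⟨X, hXB⟩ u hu)

private lemma single_lemma {W : Type u} (κ : Cardinal.{u}) (hreg : κ.IsRegular)
    (S : Set (W → W → Prop)) (x : W) (R₁ : W → W → Prop) (hR₁ : R₁ ∈ S) :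
    ∃ U : Set (Set W), Cardinal.mk ↥U < κ ∧ ∀ u : W, RU S U x u → R₁ x u := by
  refine ⟨{ {z | ¬ R₁ x z} }, ?_, fun u hu => ?_⟩
  · calc Cardinal.mk ↥({ {z | ¬ R₁ x z} } : Set (Set W)) = 1 := Cardinal.mk_singleton _
      _ < Cardinal.aleph0 := Cardinal.one_lt_aleph0
      _ ≤ κ := hreg.aleph0_le
  · by_contra h
    obtain ⟨z, hz, hRz⟩ := hu {z | ¬ R₁ x z} rfl h R₁ hR₁
    exact hz hRz

/-- For a regular cardinal κ and a κ-downward directed multi-relational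
Kripke frame `M = (W,S)`, the identity map on `W` is a homomorphism of multi-relational
Kripke frames from `(W,S)` to `(W,{R(U) | U ⊆ 𝒫(W), |U| < κ})` and conversely; hence the
two frames are isomorphic. -/
theorem stmt_17 {W : Type u} [Nonempty W] (κ : Cardinal.{u}) (hreg : κ.IsRegular)
    (S : Set (W → W → Prop)) (hS : S.Nonempty) (hdd : DownDirected S κ) :
    MultiHom S {R : W → W → Prop | ∃ U : Set (Set W), Cardinal.mk ↥U < κ ∧ R = RU S U}
      (id : W → W) ∧
    MultiHom {R : W → W → Prop | ∃ U : Set (Set W), Cardinal.mk ↥U < κ ∧ R = RU S U} S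
      (id : W → W) := by
  constructor
  · constructor
    · rintro x R₂ ⟨U, hU, rfl⟩
      obtain ⟨R, hRS, hR⟩ := key_lemma κ S hdd x U hU
      exact ⟨R, hRS, fun y hy => hR y hy⟩
    · intro x R₁ hR₁
      obtain ⟨U, hU, h⟩ := single_lemma κ hreg S x R₁ hR₁
      exact ⟨RU S U, ⟨U, hU, rfl⟩, fun u hu => ⟨u, h u hu, rfl⟩⟩
  · constructor
    · intro x R₂ hR₂
      obtain ⟨U, hU, h⟩ := single_lemma κ hreg S x R₂ hR₂
      exact ⟨RU S U, ⟨U, hU, rfl⟩, fun y hy => h y hy⟩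
    · rintro x R₁ ⟨U, hU, rfl⟩
      obtain ⟨R, hRS, hR⟩ := key_lemma κ S hdd x U hU
      exact ⟨R, hRS, fun u hu => ⟨u, hR u hu, rfl⟩⟩
end

section
/- Let κ be a regular cardinal and M₁ = (W₁,S₁), M₂ = (W₂,S₂) κ-downward directed multi-relational Kripke frames. A map f : W₁ → W₂ is a homomorphism of multi-relational Kripke frames from M₁ to M₂ if and only if for every U ⊆ W₂: ⋂_{R∈S₁} ⟨R⟩(f⁻¹[U]) = f⁻¹[⋂_{Q∈S₂} ⟨Q⟩U], where ⟨R⟩X = {w | w R x for some x ∈ X} (i.e., if and only if the preimage map U ↦ f⁻¹[U] is a homomorphism of complete modal algebras from the powerset algebra of W₂ with operator □_{M₂} to the powerset algebra of W₁ with operator □_{M₁}, where □_M X = ⋂_{R∈S} ⟨R⟩X). -/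
universe u

/-- For κ regular and κ-downward directed multi-relational Kripke frames
`M₁`, `M₂`, a map `f : W₁ → W₂` is a homomorphism of multi-relational Kripke frames iff
`□_{M₁}(f⁻¹[U]) = f⁻¹[□_{M₂} U]` for every `U ⊆ W₂` (i.e. iff `U ↦ f⁻¹[U]` is a
homomorphism of complete modal algebras between the powerset algebras). -/
theorem stmt_18 {W₁ W₂ : Type u} [Nonempty W₁] [Nonempty W₂]
    (κ : Cardinal.{u}) (hreg : κ.IsRegular)
    (S₁ : Set (W₁ → W₁ → Prop)) (S₂ : Set (W₂ → W₂ → Prop))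
    (hS₁ : S₁.Nonempty) (hS₂ : S₂.Nonempty)
    (hdd₁ : DownDirected S₁ κ) (hdd₂ : DownDirected S₂ κ)
    (f : W₁ → W₂) :
    MultiHom S₁ S₂ f ↔ ∀ U : Set W₂, boxM S₁ (f ⁻¹' U) = f ⁻¹' (boxM S₂ U) := by
  constructor
  · rintro ⟨h1, h2⟩ U
    ext w
    simp only [boxM, Set.mem_setOf_eq, Set.mem_preimage]
    constructor
    · intro hw R₂ hR₂
      obtain ⟨R₁, hR₁, hmap⟩ := h1 w R₂ hR₂
      obtain ⟨y, hy, hR⟩ := hw R₁ hR₁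
      exact ⟨f y, hy, hmap y hR⟩
    · intro hw R₁ hR₁
      obtain ⟨R₂, hR₂, hback⟩ := h2 w R₁ hR₁
      obtain ⟨u, hu, hR⟩ := hw R₂ hR₂
      obtain ⟨y, hy, hfy⟩ := hback u hR
      exact ⟨y, by rw [hfy]; exact hu, hy⟩
  · intro h
    constructor
    · intro x R₂ hR₂
      by_contra hc
      push_neg at hc
      -- hc : ∀ R₁ ∈ S₁, ∃ y, R₁ x y ∧ ¬R₂ (f x) (f y)
      have hx : x ∈ boxM S₁ (f ⁻¹' {u | ¬ R₂ (f x) u}) := by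
        intro R hR
        obtain ⟨y, hy, hny⟩ := hc R hR
        exact ⟨y, hny, hy⟩
      rw [h] at hx
      obtain ⟨u, hu, hR⟩ := hx R₂ hR₂
      exact hu hR
    · intro x R₁ hR₁
      by_contra hc
      push_neg at hc
      have hx : x ∈ f ⁻¹' boxM S₂ {u | ¬ ∃ y, R₁ x y ∧ f y = u} := by
        intro R hR
        obtain ⟨u, hu, hnu⟩ := hc R hR
        exact ⟨u, fun ⟨y, hy, hfy⟩ => hnu y hy hfy, hu⟩
      rw [← h] at hx
      obtain ⟨y, hy, hR⟩ := hx R₁ hR₁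
      exact hy ⟨y, hR, rfl⟩
end

section
/- For every regular cardinal κ there exist a nonempty set W and an operator □ : 𝒫(W) → 𝒫(W) such that: □∅ = ∅; □(⋃_{i∈I} X_i) = ⋃_{i∈I} □X_i for every family {X_i}_{i∈I} of subsets of W with |I| < κ; but there exists a family {X_α}_{α<κ} of subsets of W with □(⋃_{α<κ} X_α) ≠ ⋃_{α<κ} □X_α. Consequently, for any regular cardinals κ < κ', there exists a complete atomic modal algebra that is κ-additive but not κ'-additive. (Concretely one may take W = κ ∪ {∞}, S = {Q_X | X ⊆ κ, |X| < κ} with Q_X = {(∞,α) | α ∈ κ, α ∉ X}, and □Y = ⋂_{Q∈S}{w | w Q y for some y ∈ Y}; then ∞ ∈ □(⋃_{α<κ}{α}) but ∞ ∉ ⋃_{α<κ}□{α}.) -/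
universe u

/-- for every regular cardinal κ there is a nonempty set `W` and an
operator `□ : 𝒫(W) → 𝒫(W)` with `□∅ = ∅` which distributes over unions of families of
size `< κ`, but fails to distribute over some union of a family indexed by a set of
cardinality κ. Consequently, for any regular κ' > κ, the resulting complete atomic modal
algebra is κ-additive but not κ'-additive (witnessed by a family of size `< κ'`). -/
theorem stmt_19 (κ : Cardinal.{u}) (hreg : κ.IsRegular) :
    ∃ (W : Type u) (_ : Nonempty W) (box : Set W → Set W),
      box ∅ = ∅ ∧
      (∀ (I : Type u) (X : I → Set W), Cardinal.mk I < κ →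
        box (⋃ i, X i) = ⋃ i, box (X i)) ∧
      (∃ (ι : Type u) (X : ι → Set W), Cardinal.mk ι = κ ∧
        box (⋃ i, X i) ≠ ⋃ i, box (X i)) ∧
      (∀ κ' : Cardinal.{u}, κ'.IsRegular → κ < κ' →
        ∃ 𝒳 : Set (Set W), Cardinal.mk ↥𝒳 < κ' ∧ box (⋃₀ 𝒳) ≠ ⋃₀ (box '' 𝒳)) := by
  classical
  set A : Type u := κ.out with hA
  have hmkA : Cardinal.mk A = κ := Cardinal.mk_out κ
  refine ⟨Option A, ⟨none⟩,
    fun Y => {w | w = none ∧ κ ≤ Cardinal.mk {a : A | some a ∈ Y}}, ?_, ?_, ?_, ?_⟩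
  · ext w
    simp only [Set.mem_setOf_eq, Set.mem_empty_iff_false, iff_false, not_and]
    intro _
    have : ({a : A | False} : Set A) = ∅ := by ext a; simp
    rw [this, Cardinal.mk_emptyCollection]
    exact not_le_of_gt (lt_of_lt_of_le (by simpa using Cardinal.aleph0_pos) hreg.aleph0_le)
  · intro I X hI
    ext w
    simp only [Set.mem_setOf_eq, Set.mem_iUnion]
    constructor
    · rintro ⟨rfl, hκ⟩
      have htr : {a : A | ∃ i, some a ∈ X i} = ⋃ i, {a : A | some a ∈ X i} := by
        ext a; simp
      rw [htr] at hκ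
      by_contra hcon
      push_neg at hcon
      have : Cardinal.mk ↥(⋃ i, {a : A | some a ∈ X i}) < κ := by
        rw [Cardinal.card_iUnion_lt_iff_forall_of_isRegular hreg hI]
        intro i
        exact hcon i rfl
      exact absurd hκ (not_le_of_gt this)
    · rintro ⟨i, rfl, hκ⟩
      refine ⟨rfl, le_trans hκ (Cardinal.mk_le_mk_of_subset ?_)⟩
      intro a ha
      exact ⟨i, ha⟩
  · refine ⟨A, fun a => {some a}, hmkA, ?_⟩
    intro h
    have hnone : (none : Option A) ∈ ⋃ a : A, {w | w = none ∧
        κ ≤ Cardinal.mk {b : A | (some b : Option A) ∈ ({some a} : Set (Option A))}} := by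
      rw [← h]
      refine ⟨rfl, ?_⟩
      have : {a : A | (some a : Option A) ∈ ⋃ b : A, ({some b} : Set (Option A))} = Set.univ := by
        ext a; simp
      rw [this, Cardinal.mk_univ, hmkA]
    obtain ⟨a, -, ha⟩ := Set.mem_iUnion.1 hnone
    have : {b : A | (some b : Option A) ∈ ({some a} : Set (Option A))} = {a} := by
      ext b; simp
    rw [this, Cardinal.mk_singleton] at ha
    exact absurd ha (not_le_of_gt (lt_of_lt_of_le Cardinal.one_lt_aleph0 hreg.aleph0_le))
  · intro κ' hreg' hlt
    refine ⟨Set.range (fun a : A => ({some a} : Set (Option A))), ?_, ?_⟩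
    · exact lt_of_le_of_lt (le_trans Cardinal.mk_range_le (le_of_eq hmkA)) hlt
    · intro h
      have hnone : (none : Option A) ∈
          ({w | w = none ∧ κ ≤ Cardinal.mk {a : A |
            (some a : Option A) ∈ ⋃₀ Set.range (fun a : A => ({some a} : Set (Option A)))}}
            : Set (Option A)) := by
        refine ⟨rfl, ?_⟩
        have : {a : A | (some a : Option A) ∈
            ⋃₀ Set.range (fun a : A => ({some a} : Set (Option A)))} = Set.univ := by
          ext a
          simp only [Set.mem_setOf_eq, Set.mem_sUnion, Set.mem_range, Set.mem_univ, iff_true]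
          exact ⟨{some a}, ⟨a, rfl⟩, rfl⟩
        rw [this, Cardinal.mk_univ, hmkA]
      beta_reduce at h
      rw [h] at hnone
      obtain ⟨S, hS, hmem⟩ := hnone
      obtain ⟨Y, ⟨a, rfl⟩, rfl⟩ := hS
      obtain ⟨-, ha⟩ := hmem
      have : {b : A | (some b : Option A) ∈ ({some a} : Set (Option A))} = {a} := by
        ext b; simp
      rw [this, Cardinal.mk_singleton] at ha
      exact absurd ha (not_le_of_gt (lt_of_lt_of_le Cardinal.one_lt_aleph0 hreg.aleph0_le))
end
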